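/- arXiv:1401.1703 — 3 statements merged into one kernel-verified Lean document; each statement's English description precedes it below -/
import Mathlib

section
/- For every natural number k and every z ≠ 0, the k-th derivative of the entire function z ↦ J₁(z)/z is given by d^k/dz^k [J₁(z)/z] = 2·(-1)^k·k!·∑_{i=0}^{⌊k/2⌋} (-1)^i/(i!·(k-2i)!) · J_{k+1-i}(z)/(2z)^{i+1}. -/
/-!
With the Bessel–Clifford function `𝒞_ν(x) = ∑ xᵐ / (m! (m + ν)!)` one has
`J_ν(z) = (z/2)^ν 𝒞_ν(-(z/2)²)` and `𝒞_ν' = 𝒞_{ν+1}`; in particular `J₁(z)/z = 𝒞₁(-(z/2)²)/2`.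
Since `z^n 𝒞_ν(-(z/2)²)` has derivative `n z^(n-1) 𝒞_ν(-(z/2)²) - z^(n+1)/2 · 𝒞_{ν+1}(-(z/2)²)`,
induction shows that the `k`-th derivative is `∑ᵢ c_{k,i} z^(k-2i) 𝒞_{k+1-i}(-(z/2)²)` with
`c_{k,i} = (-1)^(k+i) C(k,2i) (2i)! / (i! 2^(k+1))`, the recurrence for `c` being Pascal's rule.
For `z ≠ 0` each term converts back to a multiple of `J_{k+1-i}(z) / (2z)^(i+1)`.
-/

open Real Finset

/-- The Bessel function of the first kind of nonnegative integer order `ν`. -/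
noncomputable def besselJ (ν : ℕ) (z : ℝ) : ℝ :=
  ∑' m : ℕ, (-1)^m * (z / 2)^(2 * m + ν) /
    ((m.factorial : ℝ) * Real.Gamma ((m : ℝ) + ν + 1))

/-- The entire extension of `J₁(z)/z`. -/
noncomputable def besselJ1div (z : ℝ) : ℝ :=
  ∑' m : ℕ, (-1)^m * z^(2 * m) /
    (2^(2 * m + 1) * (m.factorial : ℝ) * ((m+1).factorial : ℝ))

open scoped Nat

noncomputable def besselClifford (ν : ℕ) (x : ℝ) : ℝ :=
  ∑' m : ℕ, x ^ m / (m ! * (m + ν)! : ℝ)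

lemma summable_besselClifford (ν : ℕ) (x : ℝ) :
    Summable fun m : ℕ => x ^ m / (m ! * (m + ν)! : ℝ) := by
  refine (Real.summable_pow_div_factorial |x|).of_norm_bounded fun m => ?_
  rw [norm_div, norm_pow, Real.norm_eq_abs, Real.norm_of_nonneg (by positivity)]
  gcongr
  exact le_mul_of_one_le_right (by positivity) (mod_cast (m + ν).factorial_pos)

lemma hasDerivAt_besselClifford (ν : ℕ) (x : ℝ) :
    HasDerivAt (besselClifford ν) (besselClifford (ν + 1) x) x := by
  set R := |x| + 1
  have hx : x ∈ Metric.ball (0 : ℝ) R := by simp [R]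
  have hbound : Summable fun m : ℕ => m * R ^ (m - 1) / m ! := by
    refine (summable_nat_add_iff 1).mp ((Real.summable_pow_div_factorial R).congr fun m => ?_)
    rw [Nat.add_sub_cancel, Nat.factorial_succ]
    push_cast
    field_simp
  have hshift : ∀ m : ℕ, ((m + 1 : ℕ) : ℝ) * x ^ (m + 1 - 1) / ((m + 1)! * (m + 1 + ν)! : ℝ) =
      x ^ m / (m ! * (m + (ν + 1))! : ℝ) := fun m => by
    rw [Nat.add_sub_cancel, Nat.factorial_succ, show m + 1 + ν = m + (ν + 1) by ring]
    push_cast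
    field_simp
  have htsum := hasDerivAt_tsum_of_isPreconnected hbound Metric.isOpen_ball
    (convex_ball (0 : ℝ) R).isPreconnected
    (fun m y _ => (hasDerivAt_pow m y).div_const (m ! * (m + ν)! : ℝ))
    (fun m y hy => ?_) hx (summable_besselClifford ν x) hx
  · refine htsum.congr_deriv ?_
    rw [tsum_eq_zero_add' (by simpa only [hshift] using summable_besselClifford (ν + 1) x)]
    simp only [CharP.cast_eq_zero, zero_mul, zero_div, zero_add, hshift, besselClifford]
  · have hy : |y| ≤ R := by simpa using (Metric.mem_ball.mp hy).le
    simp only [norm_div, norm_mul, norm_pow, Real.norm_eq_abs, Nat.abs_cast]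
    gcongr
    exact le_mul_of_one_le_right (by positivity) (mod_cast (m + ν).factorial_pos)

lemma besselJ_eq_besselClifford (ν : ℕ) (z : ℝ) :
    besselJ ν z = (z / 2) ^ ν * besselClifford ν (-(z / 2) ^ 2) := by
  rw [besselJ, besselClifford, ← tsum_mul_left]
  congr 1; funext m
  rw [show (m : ℝ) + ν + 1 = ((m + ν : ℕ) : ℝ) + 1 by push_cast; ring, Real.Gamma_nat_eq_factorial,
    neg_pow ((z / 2) ^ 2), ← pow_mul, pow_add]
  ring

lemma besselJ1div_eq_besselClifford (z : ℝ) :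
    besselJ1div z = besselClifford 1 (-(z / 2) ^ 2) / 2 := by
  rw [besselJ1div, besselClifford, ← tsum_div_const]
  congr 1; funext m
  rw [neg_pow ((z / 2) ^ 2), ← pow_mul, div_pow, pow_succ]
  field_simp

lemma hasDerivAt_pow_mul_besselClifford (n ν : ℕ) (z : ℝ) :
    HasDerivAt (fun z => z ^ n * besselClifford ν (-(z / 2) ^ 2))
      (n * z ^ (n - 1) * besselClifford ν (-(z / 2) ^ 2)
        - z ^ n * (z / 2) * besselClifford (ν + 1) (-(z / 2) ^ 2)) z := by
  have hsq : HasDerivAt (fun z : ℝ => -(z / 2) ^ 2) (-(z / 2)) z := by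
    refine (((hasDerivAt_id z).div_const 2).pow 2).neg.congr_deriv ?_
    norm_num
    ring
  refine ((hasDerivAt_pow n z).mul ((hasDerivAt_besselClifford ν _).comp z hsq)).congr_deriv ?_
  simp only [Function.comp_apply]
  ring

/-- Writing `k! / (i! (k - 2i)!)` as `C(k, 2i) (2i)! / i!` makes the coefficient vanish for
`2i > k`, so the sums below can all run over `range (k + 1)`. -/
noncomputable def besselJ1divCoeff (k i : ℕ) : ℝ :=
  (-1) ^ (k + i) * (k.choose (2 * i) * (2 * i)! / i !) / 2 ^ (k + 1)

lemma besselJ1divCoeff_eq_zero {k i : ℕ} (h : k < 2 * i) : besselJ1divCoeff k i = 0 := by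
  simp [besselJ1divCoeff, Nat.choose_eq_zero_of_lt h]

lemma besselJ1divCoeff_of_le {k i : ℕ} (h : 2 * i ≤ k) :
    besselJ1divCoeff k i = (-1) ^ (k + i) * k ! / (i ! * (k - 2 * i)! * 2 ^ (k + 1)) := by
  have hk : (k.choose (2 * i) * (2 * i)! * (k - 2 * i)! : ℝ) = k ! := by
    exact_mod_cast Nat.choose_mul_factorial_mul_factorial h
  rw [besselJ1divCoeff, ← hk]
  field_simp

lemma besselJ1divCoeff_succ_zero (k : ℕ) :
    besselJ1divCoeff (k + 1) 0 = -(besselJ1divCoeff k 0 / 2) := by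
  simp [besselJ1divCoeff, pow_succ, neg_div, div_div]

lemma besselJ1divCoeff_succ_succ (k j : ℕ) :
    besselJ1divCoeff (k + 1) (j + 1) =
      (k - 2 * j : ℕ) * besselJ1divCoeff k j - besselJ1divCoeff k (j + 1) / 2 := by
  have hpascal : ((k + 1).choose (2 * j + 1 + 1) : ℝ) =
      k.choose (2 * j + 1) + k.choose (2 * j + 1 + 1) := by
    exact_mod_cast Nat.choose_succ_succ' k (2 * j + 1)
  have hratio : (k.choose (2 * j + 1) * (2 * j + 1) : ℝ) = k.choose (2 * j) * (k - 2 * j : ℕ) := by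
    exact_mod_cast Nat.choose_succ_right_eq k (2 * j)
  simp only [besselJ1divCoeff, show 2 * (j + 1) = 2 * j + 1 + 1 by ring, hpascal,
    Nat.factorial_succ, pow_succ]
  push_cast
  field_simp
  linear_combination (-1) ^ k * (-1) ^ j * (2 * j + 2) * hratio

lemma sum_besselJ1divCoeff_succ (k : ℕ) (X : ℕ → ℝ) :
    ∑ i ∈ range (k + 1),
        ((k - 2 * i : ℕ) * besselJ1divCoeff k i * X (i + 1) - besselJ1divCoeff k i / 2 * X i) =
      ∑ j ∈ range (k + 2), besselJ1divCoeff (k + 1) j * X j := by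
  rw [sum_range_succ' _ (k + 1)]
  simp only [besselJ1divCoeff_succ_succ, besselJ1divCoeff_succ_zero, sub_mul, sum_sub_distrib]
  rw [sum_range_succ (fun i => besselJ1divCoeff k (i + 1) / 2 * X (i + 1)),
    besselJ1divCoeff_eq_zero (by omega : k < 2 * (k + 1)),
    sum_range_succ' (fun i => besselJ1divCoeff k i / 2 * X i)]
  ring

noncomputable def besselJ1divDeriv (k : ℕ) (z : ℝ) : ℝ :=
  ∑ i ∈ range (k + 1),
    besselJ1divCoeff k i * (z ^ (k - 2 * i) * besselClifford (k + 1 - i) (-(z / 2) ^ 2))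

lemma hasDerivAt_besselJ1divDeriv (k : ℕ) (z : ℝ) :
    HasDerivAt (besselJ1divDeriv k) (besselJ1divDeriv (k + 1) z) z := by
  let X (j : ℕ) := z ^ (k + 1 - 2 * j) * besselClifford (k + 2 - j) (-(z / 2) ^ 2)
  have hterm : ∀ i ∈ range (k + 1), HasDerivAt
      (fun z => besselJ1divCoeff k i *
        (z ^ (k - 2 * i) * besselClifford (k + 1 - i) (-(z / 2) ^ 2)))
      ((k - 2 * i : ℕ) * besselJ1divCoeff k i * X (i + 1) - besselJ1divCoeff k i / 2 * X i) z := by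
    intro i hi
    rw [mem_range] at hi
    refine ((hasDerivAt_pow_mul_besselClifford _ _ z).const_mul _).congr_deriv ?_
    rcases le_or_gt (2 * i) k with h | h
    · simp only [X, show k + 1 - 2 * (i + 1) = k - 2 * i - 1 by omega,
        show k + 2 - (i + 1) = k + 1 - i by omega, show k + 1 - i + 1 = k + 2 - i by omega,
        show k + 1 - 2 * i = k - 2 * i + 1 by omega, pow_succ]
      ring
    · simp [besselJ1divCoeff_eq_zero h]
  have hsum := HasDerivAt.fun_sum hterm
  rwa [sum_besselJ1divCoeff_succ] at hsum

lemma iteratedDeriv_besselJ1div_eq (k : ℕ) :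
    iteratedDeriv k besselJ1div = besselJ1divDeriv k := by
  induction k with
  | zero =>
    funext z
    simp [besselJ1divDeriv, besselJ1div_eq_besselClifford, besselJ1divCoeff, div_eq_inv_mul]
  | succ k ih =>
    funext z
    rw [iteratedDeriv_succ, ih, (hasDerivAt_besselJ1divDeriv k z).deriv]

lemma besselJ1divCoeff_mul_eq {k i : ℕ} (h : 2 * i ≤ k) {z : ℝ} (hz : z ≠ 0) :
    besselJ1divCoeff k i * (z ^ (k - 2 * i) * besselClifford (k + 1 - i) (-(z / 2) ^ 2)) =
      2 * (-1) ^ k * k ! * ((-1) ^ i / (i ! * (k - 2 * i)!) *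
        (besselJ (k + 1 - i) z / (2 * z) ^ (i + 1))) := by
  rw [besselJ1divCoeff_of_le h, besselJ_eq_besselClifford]
  obtain ⟨d, rfl⟩ := Nat.exists_eq_add_of_le h
  simp only [show 2 * i + d - 2 * i = d by omega, show 2 * i + d + 1 - i = d + i + 1 by omega,
    div_pow]
  field_simp
  ring

/-- for `z ≠ 0`,
`d^k/dz^k [J₁(z)/z] = 2 (-1)^k k! ∑_{i=0}^{⌊k/2⌋} (-1)^i/(i!(k-2i)!) · J_{k+1-i}(z)/(2z)^{i+1}`. -/
theorem iteratedDeriv_besselJ1div (k : ℕ) (z : ℝ) (hz : z ≠ 0) :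
    iteratedDeriv k besselJ1div z =
      2 * (-1)^k * (k.factorial : ℝ) *
        ∑ i ∈ Finset.range (k / 2 + 1),
          (-1)^i / ((i.factorial : ℝ) * ((k - 2 * i).factorial : ℝ)) *
            (besselJ (k + 1 - i) z / (2 * z)^(i + 1)) := by
  rw [iteratedDeriv_besselJ1div_eq, besselJ1divDeriv, mul_sum]
  refine (sum_subset (range_subset_range.mpr (by omega)) fun i _ hi => ?_).symm.trans
    (sum_congr rfl fun i hi => besselJ1divCoeff_mul_eq ?_ hz)
  · rw [besselJ1divCoeff_eq_zero (by rw [mem_range] at hi; omega), zero_mul]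
  · have := mem_range.mp hi
    omega
end

section
/- Let C_n(ν,z) be defined by C₀(ν,z)=1, C₁(ν,z)=2(ν-1)/z, C_n(ν,z) = (2(ν-n)/z)·C_{n-1}(ν,z) - C_{n-2}(ν,z). Then for every integer ν ≥ 2 and z ≠ 0, C_{ν-1}(ν,z) = ∑_{j=0}^{⌈(ν-1)/2⌉} (Γ(ν-j)²/Γ(ν-2j)) · ((-1)^j/(j!)²) · (2/z)^{ν-1-2j}, where terms with Γ evaluated at nonpositive integers in the denominator are interpreted as zero. -/
open Real Finset

/-!
With `c = 2 / z` the recurrence reads `C_{n+2} = (ν - n - 2) c C_{n+1} - C_n`, and for every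
real `ν` it is solved by `C_n = ∑_j (-1)^j binom(n - j, j) (ν - 1 - j)^{\underline{n - 2j}} c^{n - 2j}`
(falling factorial): after Pascal's rule the coefficient recurrence reduces to the absorption
identity `(j + 1) binom(m, j + 1) = (m - j) binom(m, j)`. For integer `ν` and `n = ν - 1` the
binomial and the falling factorial combine to `Γ(ν - j)² / (Γ(ν - 2j) j!²)`. Terms with `2j ≥ ν`
vanish on both sides: the binomial is zero, and `Real.Gamma` is zero at nonpositive integers.
-/

/-- The coefficients `C_n(ν,z)`: `C₀ = 1`, `C₁ = 2(ν-1)/z`,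
`C_n = (2(ν-n)/z) C_{n-1} - C_{n-2}`. -/
noncomputable def lomC (ν z : ℝ) : ℕ → ℝ
  | 0 => 1
  | 1 => 2 * (ν - 1) / z
  | (n + 2) => (2 * (ν - (n + 2)) / z) * lomC ν z (n + 1) - lomC ν z n

-- For `n < 2 * j` the binomial factor vanishes, so the truncated subtractions are harmless.
noncomputable def lommelCoeff (ν : ℝ) (n j : ℕ) : ℝ :=
  (-1) ^ j * (n - j).choose j * (descPochhammer ℝ (n - 2 * j)).eval (ν - 1 - j)

lemma descPochhammer_succ_eval_add_one {R : Type*} [CommRing R] (x : R) (k : ℕ) :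
    (descPochhammer R (k + 1)).eval (x + 1) = (x + 1) * (descPochhammer R k).eval x := by
  simp [descPochhammer_succ_left]

lemma lommelCoeff_eq_zero_of_lt {ν : ℝ} {n j : ℕ} (h : n < 2 * j) : lommelCoeff ν n j = 0 := by
  simp [lommelCoeff, Nat.choose_eq_zero_of_lt (by omega : n - j < j)]

lemma lommelCoeff_zero_right (ν : ℝ) (n : ℕ) :
    lommelCoeff ν n 0 = (descPochhammer ℝ n).eval (ν - 1) := by
  simp [lommelCoeff]

lemma lommelCoeff_succ_succ (ν : ℝ) (n j : ℕ) :
    lommelCoeff ν (n + 2) (j + 1) =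
      (ν - n - 2) * lommelCoeff ν (n + 1) (j + 1) - lommelCoeff ν n j := by
  rcases lt_trichotomy (2 * j) n with h | rfl | h
  · obtain ⟨k, rfl⟩ : ∃ k, n = 2 * j + k + 1 := ⟨n - 2 * j - 1, by omega⟩
    set x := ν - 2 - j
    have hx : ν - 1 - j = x + 1 := by ring
    have hx' : ν - 1 - ((j + 1 : ℕ) : ℝ) = x := by push_cast; ring
    have pascal := Nat.choose_succ_succ' (j + k + 1) j
    have absorb : ((j + k + 1).choose (j + 1) : ℝ) * (j + 1) = (j + k + 1).choose j * (k + 1) := by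
      exact_mod_cast (Nat.choose_succ_right_eq (j + k + 1) j).trans
        (by rw [show j + k + 1 - j = k + 1 by omega])
    simp only [lommelCoeff, show 2 * j + k + 1 + 2 - (j + 1) = j + k + 2 by omega,
      show 2 * j + k + 1 + 2 - 2 * (j + 1) = k + 1 by omega,
      show 2 * j + k + 1 + 1 - (j + 1) = j + k + 1 by omega,
      show 2 * j + k + 1 + 1 - 2 * (j + 1) = k by omega,
      show 2 * j + k + 1 - j = j + k + 1 by omega, show 2 * j + k + 1 - 2 * j = k + 1 by omega,
      hx, hx', pascal]
    rw [descPochhammer_succ_eval_add_one, descPochhammer_succ_eval]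
    push_cast
    linear_combination (-1) ^ (j + 1) * (descPochhammer ℝ k).eval x * absorb
  · simp [lommelCoeff, show 2 * j + 1 - j = j + 1 by omega, show 2 * j - j = j by omega,
      show 2 * j + 2 - 2 * (j + 1) = 0 by omega, pow_succ]
  · simp only [lommelCoeff_eq_zero_of_lt (by omega : n + 2 < 2 * (j + 1)),
      lommelCoeff_eq_zero_of_lt (by omega : n + 1 < 2 * (j + 1)), lommelCoeff_eq_zero_of_lt h]
    ring

lemma lommelCoeff_succ_mul_pow_add_two (ν c : ℝ) (n j : ℕ) :
    lommelCoeff ν (n + 2) (j + 1) * c ^ (n + 2 - 2 * (j + 1)) =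
      (ν - n - 2) * c * (lommelCoeff ν (n + 1) (j + 1) * c ^ (n + 1 - 2 * (j + 1))) -
        lommelCoeff ν n j * c ^ (n - 2 * j) := by
  rw [lommelCoeff_succ_succ, show n + 2 - 2 * (j + 1) = n - 2 * j by omega]
  by_cases h : 2 * j < n
  · rw [show n - 2 * j = n + 1 - 2 * (j + 1) + 1 by omega, pow_succ]
    ring
  · rw [lommelCoeff_eq_zero_of_lt (by omega : n + 1 < 2 * (j + 1))]
    ring

lemma lommelCoeff_zero_mul_pow_add_two (ν c : ℝ) (n : ℕ) :
    lommelCoeff ν (n + 2) 0 * c ^ (n + 2 - 2 * 0) =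
      (ν - n - 2) * c * (lommelCoeff ν (n + 1) 0 * c ^ (n + 1 - 2 * 0)) := by
  simp only [lommelCoeff_zero_right, descPochhammer_succ_eval (n + 1)]
  push_cast
  ring

theorem lomC_eq_sum (ν z : ℝ) :
    ∀ {n N : ℕ}, n < 2 * N →
      lomC ν z n = ∑ j ∈ range N, lommelCoeff ν n j * (2 / z) ^ (n - 2 * j)
  | 0, N, h | 1, N, h => by
    rw [sum_eq_single_of_mem 0 (mem_range.2 (by omega))
      fun j _ hj => by rw [lommelCoeff_eq_zero_of_lt (by omega), zero_mul]]
    simp [lomC, lommelCoeff_zero_right, mul_div_assoc, mul_comm]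
  | n + 2, N, h => by
    obtain ⟨M, rfl⟩ : ∃ M, N = M + 1 := ⟨N - 1, by omega⟩
    have hrec : lomC ν z (n + 2) = (ν - n - 2) * (2 / z) * lomC ν z (n + 1) - lomC ν z n := by
      simp only [lomC]
      ring
    rw [hrec, lomC_eq_sum ν z (N := M + 1) (by omega), lomC_eq_sum ν z (n := n) (N := M) (by omega),
      sum_range_succ', sum_range_succ', lommelCoeff_zero_mul_pow_add_two]
    simp only [lommelCoeff_succ_mul_pow_add_two, sum_sub_distrib, ← mul_sum]
    ring

lemma lommelCoeff_pred_mul_pow_eq_gamma {ν : ℕ} (hν : 1 ≤ ν) (j : ℕ) (c : ℝ) :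
    lommelCoeff ν (ν - 1) j * c ^ (ν - 1 - 2 * j) =
      (Gamma ((ν : ℝ) - j) ^ 2 / Gamma ((ν : ℝ) - 2 * j)) *
        ((-1) ^ j / ((j.factorial : ℝ)) ^ 2) * c ^ ((ν : ℤ) - 1 - 2 * j) := by
  by_cases h : 2 * j < ν
  · obtain ⟨m, rfl⟩ : ∃ m, ν = 2 * j + m + 1 := ⟨ν - 2 * j - 1, by omega⟩
    have hchoose : ((j + m).choose j : ℝ) * m.factorial * j.factorial = (j + m).factorial := by
      exact_mod_cast add_comm m j ▸ Nat.add_choose_mul_factorial_mul_factorial m j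
    have hdesc : (j.factorial : ℝ) * (j + m).descFactorial m = (j + m).factorial := by
      exact_mod_cast Nat.add_sub_cancel j m ▸ Nat.factorial_mul_descFactorial (Nat.le_add_left m j)
    have e1 : ((2 * j + m + 1 : ℕ) : ℝ) - 1 - j = (j + m : ℕ) := by push_cast; ring
    have e2 : ((2 * j + m + 1 : ℕ) : ℝ) - j = (j + m : ℕ) + 1 := by push_cast; ring
    have e3 : ((2 * j + m + 1 : ℕ) : ℝ) - 2 * j = m + 1 := by push_cast; ring
    have e4 : ((2 * j + m + 1 : ℕ) : ℤ) - 1 - 2 * j = m := by push_cast; ring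
    simp only [lommelCoeff, show 2 * j + m + 1 - 1 - j = j + m by omega,
      show 2 * j + m + 1 - 1 - 2 * j = m by omega, e1, e2, e3, e4, zpow_natCast,
      descPochhammer_eval_eq_descFactorial, Gamma_nat_eq_factorial]
    field_simp
    linear_combination c ^ m * (j.factorial * (j + m).descFactorial m * hchoose +
      (j + m).factorial * hdesc)
  · have hgamma : Gamma ((ν : ℝ) - 2 * j) = 0 := by
      rw [show (ν : ℝ) - 2 * j = -((2 * j - ν : ℕ) : ℝ) by push_cast [not_lt.mp h]; ring]
      exact Gamma_neg_nat_eq_zero _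
    rw [lommelCoeff_eq_zero_of_lt (by omega), hgamma, div_zero, zero_mul, zero_mul, zero_mul]

-- `⌈(ν - 1) / 2⌉ = ν / 2` for `ν ≥ 1`.
theorem lomC_eq_lommel_R1_general (ν : ℕ) (hν : 2 ≤ ν) (z : ℝ) :
    lomC (ν : ℝ) z (ν - 1) =
      ∑ j ∈ Finset.range (ν / 2 + 1),
        (Real.Gamma ((ν : ℝ) - j)^2 / Real.Gamma ((ν : ℝ) - 2 * j)) *
          ((-1)^j / ((j.factorial : ℝ))^2) * (2 / z)^((ν : ℤ) - 1 - 2 * j) := by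
  rw [lomC_eq_sum _ _ (by omega : ν - 1 < 2 * (ν / 2 + 1))]
  exact sum_congr rfl fun j _ => lommelCoeff_pred_mul_pow_eq_gamma (by omega) j _

/-- for `ν ≥ 2` and `z ≠ 0`,
`C_{ν-1}(ν,z) = ∑_{j=0}^{⌈(ν-1)/2⌉} (Γ(ν-j)²/Γ(ν-2j)) ((-1)^j/(j!)²) (2/z)^{ν-1-2j}`,
where `1/Γ` vanishes at nonpositive integers (`Real.Gamma` is zero there).
Note `⌈(ν-1)/2⌉ = ν/2` (natural division) for `ν ≥ 1`. -/
theorem lomC_eq_lommel_R1 (ν : ℕ) (hν : 2 ≤ ν) (z : ℝ) (hz : z ≠ 0) :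
    lomC (ν : ℝ) z (ν - 1) =
      ∑ j ∈ Finset.range (ν / 2 + 1),
        (Real.Gamma ((ν : ℝ) - j)^2 / Real.Gamma ((ν : ℝ) - 2 * j)) *
          ((-1)^j / ((j.factorial : ℝ))^2) * (2 / z)^((ν : ℤ) - 1 - 2 * j) :=
  lomC_eq_lommel_R1_general ν hν z
end

section
/- For all natural numbers j and integers ν with ν ≥ j+2, the following finite-sum identity of polynomials in z holds: ₂F₃((1-j)/2, -j/2; 1-ν, -j, ν-j; -z²), interpreted as the terminating sum ∑_{κ=0}^{⌊j/2⌋} ((1-j)/2)_κ(-j/2)_κ/(((1-ν)_κ(-j)_κ(ν-j)_κ·κ!))·(-z²)^κ, equals (Γ(ν-j)/Γ(ν))·∑_{κ=0}^{⌈(j-1)/2⌉} ((-1)^κ·Γ(ν-κ)·Γ(j+1-κ))/(Γ(j+1-2κ)·Γ(κ+ν-j)·κ!) · (z/2)^{2κ}. -/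
open Real Finset Polynomial

lemma asc_neg (κ n : ℕ) (h : κ ≤ n) :
    (ascPochhammer ℝ κ).eval (-(n:ℝ)) * ((n-κ).factorial : ℝ) = (-1)^κ * n.factorial := by
  induction κ with
  | zero => simp
  | succ k ih =>
    obtain ⟨m, rfl⟩ := Nat.exists_eq_add_of_le h
    have ih' := ih (by omega)
    rw [show k + 1 + m - k = m + 1 by omega] at ih'
    rw [show k + 1 + m - (k+1) = m by omega, ascPochhammer_succ_eval]
    push_cast [Nat.factorial_succ] at ih' ⊢
    linear_combination -ih'

lemma asc_pos (κ m : ℕ) :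
    (ascPochhammer ℝ κ).eval ((m:ℝ)+1) * (m.factorial : ℝ) = ((m+κ).factorial : ℝ) := by
  induction κ with
  | zero => simp
  | succ k ih =>
    rw [ascPochhammer_succ_eval, show m + (k+1) = (m+k)+1 by omega, Nat.factorial_succ]
    push_cast
    linear_combination ((m:ℝ)+1+k) * ih

lemma asc_half (κ j : ℕ) (h : 2*κ ≤ j) :
    (ascPochhammer ℝ κ).eval ((1 - (j:ℝ))/2) * (ascPochhammer ℝ κ).eval (-(j:ℝ)/2)
      * 4^κ * ((j - 2*κ).factorial : ℝ) = j.factorial := by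
  induction κ with
  | zero => simp
  | succ k ih =>
    obtain ⟨m, rfl⟩ := Nat.exists_eq_add_of_le h
    have ih' := ih (by omega)
    rw [show 2*(k+1)+m - 2*k = m + 2 by omega] at ih'
    rw [show 2*(k+1)+m - 2*(k+1) = m by omega, ascPochhammer_succ_eval, ascPochhammer_succ_eval]
    push_cast [Nat.factorial_succ] at ih' ⊢
    linear_combination ih'

/-- the terminating hypergeometric identity
`₂F₃((1-j)/2, -j/2; 1-ν, -j, ν-j; -z²)
  = (Γ(ν-j)/Γ(ν)) ∑_{κ=0}^{⌈(j-1)/2⌉} (-1)^κ Γ(ν-κ) Γ(j+1-κ)/(Γ(j+1-2κ) Γ(κ+ν-j) κ!) (z/2)^{2κ}`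
for `ν ≥ j+2`, where the left side is the terminating sum over `0 ≤ κ ≤ ⌊j/2⌋` with
Pochhammer (rising factorial) coefficients, and `⌈(j-1)/2⌉ = ⌊j/2⌋ = j/2` in natural
division. Terms containing `1/Γ(nonpositive integer)` vanish (`Real.Gamma` is zero there). -/
theorem hypergeometric_2F3_reduction (j ν : ℕ) (hν : j + 2 ≤ ν) (z : ℝ) :
    ∑ κ ∈ Finset.range (j / 2 + 1),
      ((ascPochhammer ℝ κ).eval ((1 - (j : ℝ)) / 2) *
          (ascPochhammer ℝ κ).eval (-(j : ℝ) / 2)) /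
        ((ascPochhammer ℝ κ).eval (1 - (ν : ℝ)) * (ascPochhammer ℝ κ).eval (-(j : ℝ)) *
            (ascPochhammer ℝ κ).eval ((ν : ℝ) - j) * (κ.factorial : ℝ)) *
        (-z^2)^κ =
    (Real.Gamma ((ν : ℝ) - j) / Real.Gamma (ν : ℝ)) *
      ∑ κ ∈ Finset.range (j / 2 + 1),
        ((-1)^κ * Real.Gamma ((ν : ℝ) - κ) * Real.Gamma ((j : ℝ) + 1 - κ)) /
          (Real.Gamma ((j : ℝ) + 1 - 2 * κ) * Real.Gamma ((κ : ℝ) + ν - j) *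
            (κ.factorial : ℝ)) * (z / 2)^(2 * κ) := by
  obtain ⟨d, rfl⟩ : ∃ d, ν = j + 2 + d := ⟨ν - (j+2), by omega⟩
  rw [Finset.mul_sum]
  apply Finset.sum_congr rfl
  intro κ hκ
  have h2κ : 2 * κ ≤ j := by
    have := Finset.mem_range.mp hκ; omega
  -- rewrite Gammas as factorials
  rw [show Real.Gamma (((j+2+d:ℕ):ℝ) - j) = ((d+1).factorial : ℝ) by
        rw [show ((j+2+d:ℕ):ℝ) - j = ((d+1:ℕ):ℝ) + 1 by push_cast; ring,
          Real.Gamma_nat_eq_factorial],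
      show Real.Gamma (((j+2+d:ℕ):ℝ)) = ((j+1+d).factorial : ℝ) by
        rw [show ((j+2+d:ℕ):ℝ) = ((j+1+d:ℕ):ℝ) + 1 by push_cast; ring,
          Real.Gamma_nat_eq_factorial],
      show Real.Gamma (((j+2+d:ℕ):ℝ) - κ) = ((j+1+d-κ).factorial : ℝ) by
        rw [show ((j+2+d:ℕ):ℝ) - κ = ((j+1+d-κ:ℕ):ℝ) + 1 by
            push_cast [show κ ≤ j+1+d by omega]; ring,
          Real.Gamma_nat_eq_factorial],
      show Real.Gamma ((j:ℝ) + 1 - κ) = ((j-κ).factorial : ℝ) by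
        rw [show (j:ℝ) + 1 - κ = ((j-κ:ℕ):ℝ) + 1 by
            push_cast [show κ ≤ j by omega]; ring,
          Real.Gamma_nat_eq_factorial],
      show Real.Gamma ((j:ℝ) + 1 - 2*κ) = ((j-2*κ).factorial : ℝ) by
        rw [show (j:ℝ) + 1 - 2*κ = ((j-2*κ:ℕ):ℝ) + 1 by push_cast [h2κ]; ring,
          Real.Gamma_nat_eq_factorial],
      show Real.Gamma ((κ:ℝ) + ((j+2+d:ℕ):ℝ) - j) = ((κ+d+1).factorial : ℝ) by
        rw [show (κ:ℝ) + ((j+2+d:ℕ):ℝ) - j = ((κ+d+1:ℕ):ℝ) + 1 by push_cast; ring,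
          Real.Gamma_nat_eq_factorial]]
  -- pochhammer values
  have hAB := asc_half κ j h2κ
  have hC := asc_neg κ (j+1+d) (by omega)
  have hD := asc_neg κ j (by omega)
  have hE := asc_pos κ (d+1)
  rw [show (1 : ℝ) - ((j+2+d:ℕ):ℝ) = -((j+1+d:ℕ):ℝ) by push_cast; ring,
      show ((j+2+d:ℕ):ℝ) - j = ((d+1:ℕ):ℝ) + 1 by push_cast; ring]
  rw [show j + 1 + d - κ = j + 1 + d - κ from rfl] at hC
  set A := (ascPochhammer ℝ κ).eval ((1 - (j:ℝ))/2)
  set B := (ascPochhammer ℝ κ).eval (-(j:ℝ)/2)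
  set C := (ascPochhammer ℝ κ).eval (-((j+1+d:ℕ):ℝ))
  set D := (ascPochhammer ℝ κ).eval (-(j:ℝ))
  set E := (ascPochhammer ℝ κ).eval (((d+1:ℕ):ℝ) + 1)
  have f0 : ∀ n : ℕ, ((n.factorial : ℝ)) ≠ 0 := fun n => by
    exact_mod_cast n.factorial_ne_zero
  have hCD : C * D = ((j+1+d).factorial * j.factorial : ℝ) /
      (((j+1+d-κ).factorial : ℝ) * ((j-κ).factorial : ℝ)) := by
    rw [eq_div_iff (by positivity)]
    calc C * D * (((j+1+d-κ).factorial : ℝ) * ((j-κ).factorial : ℝ))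
        = (C * ((j+1+d-κ).factorial : ℝ)) * (D * ((j-κ).factorial : ℝ)) := by ring
      _ = ((-1)^κ * (j+1+d).factorial) * ((-1)^κ * j.factorial) := by rw [hC, hD]
      _ = _ := by
          have : ((-1:ℝ))^κ * (-1)^κ = 1 := by
            rw [← mul_pow]; norm_num
          linear_combination (((j+1+d).factorial : ℝ) * (j.factorial : ℝ)) * this
  have hEv : E = ((d+1+κ).factorial : ℝ) / ((d+1).factorial : ℝ) :=
    (eq_div_iff (f0 _)).mpr hE
  have hABv : A * B = (j.factorial : ℝ) / (4^κ * ((j-2*κ).factorial : ℝ)) := by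
    rw [eq_div_iff (by positivity)]
    linear_combination hAB
  rw [hABv, hCD, hEv]
  have h4 : (4:ℝ)^κ ≠ 0 := by positivity
  field_simp
  rw [show (4:ℝ)^κ = 2^(2*κ) by rw [pow_mul]; norm_num]
  have h2 : ((1:ℝ)/2)^(κ*2) * 2^(κ*2) = 1 := by rw [← mul_pow]; norm_num
  rw [show κ + d + 1 = d + 1 + κ by ring]
  linear_combination (-(z ^ (κ * 2) * ((d + 1 + κ).factorial : ℝ) * (-1) ^ κ)) * h2
end
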